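/- For σ ∈ (0,1), p > 0, k ≥ 1, and n_B ≥ 3, setting x = (1-σ^{k+1})(1-σ)/(n_B-1), the inequality p·σ·(1 - σ^{k-1} + 2σ^k(1-σ))/(1 - σ^k) > p·σ·(1 - σ^k + σ^{k+1}(1-σ))/(x + σ(1-σ^k)) never holds; i.e., the left-hand side is always at most (indeed strictly less than) the right-hand side. -/
import Mathlib

set_option maxHeartbeats 1000000

lemma core_uv (u v : ℝ) (hu0 : 0 ≤ u) (hu1 : u < 1) (hv0 : 0 < v) (hv1 : v ≤ 1) :
    0 < u^2*(1-v)^2*(1-2*v^2) + u*v*(2*(1-2*v^2) + v*(2*v-1)^2) + 2*v^3*(2-v) := by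
  have h2v : (0:ℝ) < 2 - v := by linarith
  have h3 : 0 < 2*v^3*(2-v) := by positivity
  rcases le_or_gt (2*v^2) 1 with h | h
  · have h1 : 0 ≤ u^2*(1-v)^2*(1-2*v^2) := by
      have : (0:ℝ) ≤ 1 - 2*v^2 := by linarith
      positivity
    have h2 : 0 ≤ u*v*(2*(1-2*v^2) + v*(2*v-1)^2) := by
      have : (0:ℝ) ≤ 1 - 2*v^2 := by linarith
      positivity
    linarith
  · have h1 : 0 ≤ (1-v)^2*(2*v^2-1)*(u*(1-u)) := by
      have hv2 : (0:ℝ) ≤ 2*v^2 - 1 := by linarith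
      have hu : (0:ℝ) ≤ u*(1-u) := mul_nonneg hu0 (by linarith)
      positivity
    have h2 : 0 < (1-u)*(2*v^3*(2-v)) := by
      have : (0:ℝ) < 1 - u := by linarith
      positivity
    nlinarith [h1, h2, hu0]

lemma core_as (a s : ℝ) (ha0 : 0 < a) (ha1 : a ≤ 1) (hs0 : 0 < s) (hs1 : s < 1) :
    0 < 1 + a * (1 - 4*s + s^2) - a^2 * s^2 * (2*s^2 - 4*s + 1) := by
  have h := core_uv (1-a) (1-s) (by linarith) (by linarith) (by linarith) (by linarith)
  nlinarith [h]

theorem stmt_6 (σ p : ℝ) (k nB : ℕ) (hσ0 : 0 < σ) (hσ1 : σ < 1)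
    (hp : p > 0) (hk : k ≥ 1) (hnB : nB ≥ 3) :
    p * σ * (1 - σ ^ (k - 1) + 2 * σ ^ k * (1 - σ)) / (1 - σ ^ k) <
      p * σ * (1 - σ ^ k + σ ^ (k + 1) * (1 - σ)) /
        ((1 - σ ^ (k + 1)) * (1 - σ) / ((nB : ℝ) - 1) + σ * (1 - σ ^ k)) := by
  obtain ⟨m, rfl⟩ : ∃ m, k = m + 1 := ⟨k - 1, (Nat.succ_pred_eq_of_pos hk).symm⟩
  set a : ℝ := σ ^ m with ha
  have ha0 : 0 < a := pow_pos hσ0 m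
  have ha1 : a ≤ 1 := pow_le_one₀ hσ0.le hσ1.le
  have e1 : σ ^ (m + 1 - 1) = a := by simp [ha]
  have e2 : σ ^ (m + 1) = a * σ := by rw [pow_succ]
  have e3 : σ ^ (m + 1 + 1) = a * σ * σ := by rw [pow_succ, e2]
  rw [e1, e2, e3]
  have hN : (2:ℝ) ≤ (nB : ℝ) - 1 := by
    have : (3:ℝ) ≤ (nB : ℝ) := by exact_mod_cast hnB
    linarith
  have hN0 : (0:ℝ) < (nB : ℝ) - 1 := by linarith
  have haσ : a * σ ≤ σ := by nlinarith
  have hB : 0 < 1 - a * σ := by nlinarith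
  have haσ2 : a * σ * σ ≤ 1 := by nlinarith [mul_pos hσ0 hσ0]
  have hM : 0 ≤ (1 - a * σ * σ) * (1 - σ) := mul_nonneg (by linarith) (by linarith)
  have hD : 0 < (1 - a * σ * σ) * (1 - σ) / ((nB : ℝ) - 1) + σ * (1 - a * σ) := by
    have : 0 ≤ (1 - a * σ * σ) * (1 - σ) / ((nB : ℝ) - 1) := div_nonneg hM hN0.le
    nlinarith [mul_pos hσ0 hB]
  rw [div_lt_div_iff₀ hB hD]
  have hA : 0 < 1 - a + 2 * (a * σ) * (1 - σ) := by nlinarith [mul_pos (mul_pos ha0 hσ0) (sub_pos.2 hσ1)]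
  have hG := core_as a σ ha0 ha1 hσ0 hσ1
  -- key: A * (M/2 + σ*B) < C * B
  have hE : (1 - a + 2 * (a * σ) * (1 - σ)) * ((1 - a * σ * σ) * (1 - σ) / 2 + σ * (1 - a * σ))
      < (1 - a * σ + a * σ * σ * (1 - σ)) * (1 - a * σ) := by
    nlinarith [mul_pos (sub_pos.2 hσ1) hG]
  have hxle : (1 - a * σ * σ) * (1 - σ) / ((nB : ℝ) - 1) ≤ (1 - a * σ * σ) * (1 - σ) / 2 := by
    apply div_le_div_of_nonneg_left hM (by norm_num) hN
  have h1 : (1 - a + 2 * (a * σ) * (1 - σ)) * ((1 - a * σ * σ) * (1 - σ) / ((nB : ℝ) - 1))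
      ≤ (1 - a + 2 * (a * σ) * (1 - σ)) * ((1 - a * σ * σ) * (1 - σ) / 2) :=
    mul_le_mul_of_nonneg_left hxle hA.le
  have hpσ : 0 < p * σ := mul_pos hp hσ0
  have hfin : (1 - a + 2 * (a * σ) * (1 - σ)) * ((1 - a * σ * σ) * (1 - σ) / ((nB : ℝ) - 1) + σ * (1 - a * σ))
      < (1 - a * σ + a * σ * σ * (1 - σ)) * (1 - a * σ) := by nlinarith [h1, hE]
  nlinarith [mul_lt_mul_of_pos_left hfin hpσ]
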